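/- arXiv:1801.03287 — 5 statements merged into one kernel-verified Lean document; each statement's English description precedes it below -/
import Mathlib

section
/- For any finite words u, v over an alphabet containing the letter 0, and any natural number k, the word binomial coefficient satisfies C(u 0^k, v 0^k) = \sum_{j=0}^{k} binom(k, j) * C(u, v 0^j), where binom(k, j) is the ordinary binomial coefficient and 0^j denotes j copies of the letter 0. -/
/-- The binomial coefficient of words: the number of occurrences of `v` as a
scattered subsequence of `u`. -/
def wordBinom {A : Type*} [DecidableEq A] (u v : List A) : ℕ :=
  u.sublists.count v

lemma wordBinom_concat {A : Type*} [DecidableEq A] (z : A) (u v : List A) :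
    wordBinom (u ++ [z]) (v ++ [z]) = wordBinom u (v ++ [z]) + wordBinom u v := by
  unfold wordBinom
  rw [List.sublists_concat, List.count_append]
  congr 1
  simp only [List.count, List.countP_map]
  refine List.countP_congr ?_
  intro x _
  simp [Function.comp]

theorem wordBinom_append_zeroes {A : Type*} [DecidableEq A] (z : A)
    (u v : List A) (k : ℕ) :
    wordBinom (u ++ List.replicate k z) (v ++ List.replicate k z) =
      ∑ j ∈ Finset.range (k + 1),
        Nat.choose k j * wordBinom u (v ++ List.replicate j z) := by
  induction k generalizing v with
  | zero => simp
  | succ k ih =>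
    have hrep : ∀ (w : List A), w ++ List.replicate (k + 1) z
        = (w ++ List.replicate k z) ++ [z] := by
      intro w
      rw [List.replicate_succ', ← List.append_assoc]
    rw [hrep u, hrep v, wordBinom_concat]
    have h1 : v ++ List.replicate k z ++ [z] = (v ++ [z]) ++ List.replicate k z := by
      rw [List.append_assoc, List.append_assoc, ← List.replicate_succ',
        List.singleton_append, ← List.replicate_succ]
    rw [h1, ih (v ++ [z]), ih v]
    set a : ℕ → ℕ := fun j => wordBinom u (v ++ List.replicate j z) with ha
    have ha1 : ∀ j, wordBinom u ((v ++ [z]) ++ List.replicate j z) = a (j + 1) := by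
      intro j
      simp only [ha]
      rw [List.append_assoc, List.singleton_append, ← List.replicate_succ]
    simp only [ha1]
    have hb : ∀ j, wordBinom u (v ++ List.replicate j z) = a j := fun j => rfl
    simp only [hb]
    rw [Finset.sum_range_succ' (fun j => Nat.choose (k + 1) j * a j),
        Finset.sum_range_succ' (fun j => Nat.choose k j * a j)]
    have hpas : ∀ j, Nat.choose (k + 1) (j + 1) = Nat.choose k j + Nat.choose k (j + 1) :=
      fun j => Nat.choose_succ_succ k j
    simp only [hpas, add_mul, Finset.sum_add_distrib, Nat.choose_zero_right, one_mul]
    have htop : ∑ j ∈ Finset.range (k + 1), Nat.choose k (j + 1) * a (j + 1)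
        = ∑ j ∈ Finset.range k, Nat.choose k (j + 1) * a (j + 1) := by
      rw [Finset.sum_range_succ, Nat.choose_succ_self, zero_mul, add_zero]
    rw [htop]
    ring
end

section
/- Let u, v be finite words over an alphabet A containing the letter 0, and let p, k be natural numbers. If C(u 0^p, v 0^p) is odd and C(u 0^p, v 0^p 0) = 0, then C(u, v) is odd. -/
theorem odd_wordBinom_of_star {A : Type*} [DecidableEq A] (z : A)
    (u v : List A) (p : ℕ)
    (h1 : Odd (wordBinom (u ++ List.replicate p z) (v ++ List.replicate p z)))
    (h2 : wordBinom (u ++ List.replicate p z) (v ++ List.replicate p z ++ [z]) = 0) :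
    Odd (wordBinom u v) := by
  induction p with
  | zero => simpa using h1
  | succ p ih =>
    set U := u ++ List.replicate p z with hU
    set V := v ++ List.replicate p z with hV
    have e1 : u ++ List.replicate (p + 1) z = U ++ [z] := by
      simp [hU, List.replicate_succ', List.append_assoc]
    have e2 : v ++ List.replicate (p + 1) z = V ++ [z] := by
      simp [hV, List.replicate_succ', List.append_assoc]
    rw [e1, e2] at h1 h2
    rw [wordBinom_concat] at h1
    rw [wordBinom_concat] at h2
    have hz : wordBinom U (V ++ [z]) = 0 := by omega
    apply ih
    · rw [hz] at h1; simpa using h1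
    · exact hz
end

section
/- Let u, v be finite words over an alphabet A containing the letter 0 and let p be a natural number. If for every letter a in A we have C(u 0^p, v 0^p a) = 0, then for every finite word w over A, C(u 0^p w, v 0^p w) \u2261 C(u 0^p, v 0^p) (mod 2). -/
lemma wordBinom_eq_zero_iff {A : Type*} [DecidableEq A] {u v : List A} :
    wordBinom u v = 0 ↔ ¬ List.Sublist v u := by
  rw [wordBinom, List.count_eq_zero, List.mem_sublists]

lemma wordBinom_extend_zero {A : Type*} [DecidableEq A] {u s : List A} (t : List A)
    (h : wordBinom u s = 0) : wordBinom u (s ++ t) = 0 := by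
  rw [wordBinom_eq_zero_iff] at h ⊢
  exact fun hst => h ((List.sublist_append_left s t).trans hst)

lemma count_map_concat {A : Type*} [DecidableEq A] (l : List (List A)) (a : A)
    (s : List A) : (l.map (fun x => x ++ [a])).count (s ++ [a]) = l.count s := by
  induction l with
  | nil => simp
  | cons t l ih => simp [List.count_cons, ih]

lemma wordBinom_concat_same {A : Type*} [DecidableEq A] (x s : List A) (a : A) :
    wordBinom (x ++ [a]) (s ++ [a]) = wordBinom x (s ++ [a]) + wordBinom x s := by
  simp only [wordBinom, List.sublists_concat, List.count_append]
  congr 1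
  exact count_map_concat x.sublists a s

lemma wordBinom_concat_ne {A : Type*} [DecidableEq A] (x s : List A) {a b : A}
    (hab : a ≠ b) : wordBinom (x ++ [a]) (s ++ [b]) = wordBinom x (s ++ [b]) := by
  simp only [wordBinom, List.sublists_concat, List.count_append]
  have hz : (List.map (fun x => x ++ [a]) x.sublists).count (s ++ [b]) = 0 := by
    rw [List.count_eq_zero]
    intro hmem
    obtain ⟨t, -, ht⟩ := List.mem_map.mp hmem
    exact hab (by simpa using List.append_inj_right' ht rfl)
  omega

lemma wordBinom_concat' {A : Type*} [DecidableEq A] (x s : List A) (a b : A) :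
    wordBinom (x ++ [a]) (s ++ [b]) =
      wordBinom x (s ++ [b]) + if a = b then wordBinom x s else 0 := by
  by_cases hab : a = b
  · subst hab; rw [wordBinom_concat_same, if_pos rfl]
  · rw [wordBinom_concat_ne x s hab, if_neg hab, Nat.add_zero]

lemma wordBinom_key {A : Type*} [DecidableEq A] :
    ∀ (w U V : List A), (∀ a, wordBinom U (V ++ [a]) = 0) →
      wordBinom (U ++ w) (V ++ w) = wordBinom U V := by
  intro w
  induction w with
  | nil => intro U V _; simp
  | cons a w ih =>
    intro U V h
    have h1 : ∀ b, wordBinom (U ++ [a]) ((V ++ [a]) ++ [b]) = 0 := by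
      intro b
      rw [wordBinom_concat' U (V ++ [a]) a b]
      rw [wordBinom_extend_zero [b] (h a), h a]
      simp
    have h2 : wordBinom (U ++ [a]) (V ++ [a]) = wordBinom U V := by
      rw [wordBinom_concat_same, h a, Nat.zero_add]
    calc wordBinom (U ++ a :: w) (V ++ a :: w)
        = wordBinom ((U ++ [a]) ++ w) ((V ++ [a]) ++ w) := by
          simp [List.append_assoc]
      _ = wordBinom (U ++ [a]) (V ++ [a]) := ih (U ++ [a]) (V ++ [a]) h1
      _ = wordBinom U V := h2

theorem wordBinom_append_same_mod_two {A : Type*} [DecidableEq A] (z : A)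
    (u v : List A) (p : ℕ)
    (h : ∀ a : A,
      wordBinom (u ++ List.replicate p z) (v ++ List.replicate p z ++ [a]) = 0) :
    ∀ w : List A,
      wordBinom (u ++ List.replicate p z ++ w) (v ++ List.replicate p z ++ w) ≡
        wordBinom (u ++ List.replicate p z) (v ++ List.replicate p z) [MOD 2] := by
  intro w
  rw [wordBinom_key w (u ++ List.replicate p z) (v ++ List.replicate p z) h]
end

section
/- Let u, v, w be finite words over an alphabet A containing the letter 0, and suppose the last letter of w is not 0. Then v w does not occur as a subsequence of u w 0^{k} except through occurrences of v w inside u w, and consequently C(u w 0^k, v w) = C(u w, v w) for all k \u2265 0. -/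
lemma wordBinom_concat_ne_s6 {A : Type*} [DecidableEq A] (z c : A) (hc : c ≠ z)
    (u v : List A) :
    wordBinom (u ++ [z]) (v ++ [c]) = wordBinom u (v ++ [c]) := by
  unfold wordBinom
  rw [List.sublists_concat, List.count_append]
  have h0 : List.count (v ++ [c]) (List.map (fun x => x ++ [z]) u.sublists) = 0 := by
    rw [List.count_eq_zero]
    intro hmem
    rcases List.mem_map.1 hmem with ⟨s, _, hs⟩
    have := congrArg List.getLast? hs
    simp at this
    exact hc this.symm
  omega

theorem wordBinom_append_zeroes_of_last_ne {A : Type*} [DecidableEq A]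
    (z c : A) (hc : c ≠ z) (x y w' : List A) (k : ℕ) :
    wordBinom (x ++ (w' ++ [c]) ++ List.replicate k z) (y ++ (w' ++ [c])) =
      wordBinom (x ++ (w' ++ [c])) (y ++ (w' ++ [c])) := by
  induction k with
  | zero => simp
  | succ n ih =>
    rw [List.replicate_succ' , ← List.append_assoc]
    rw [show x ++ (w' ++ [c]) ++ List.replicate n z ++ [z]
        = (x ++ (w' ++ [c]) ++ List.replicate n z) ++ [z] by simp,
      show y ++ (w' ++ [c]) = (y ++ w') ++ [c] by simp,
      wordBinom_concat_ne_s6 z c hc]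
    rw [show (y ++ w') ++ [c] = y ++ (w' ++ [c]) by simp]
    exact ih
end

section
/- Let u be a finite word over an alphabet A with distinguished letter 0 and let v be a word occurring r times as a scattered subsequence of u, where for the \u2113-th occurrence (1 \u2264 \u2113 \u2264 r) there are i_\u2113 zeroes in u strictly after that occurrence. Then for every natural number N strictly larger than the number of zeroes in u (so that a block of N zeroes followed by the letter 1 cannot be matched within u itself), the number of occurrences of v 0^N 1 as a scattered subsequence of u 0^N 1 equals \u2211_{\u2113=1}^{r} binom(N + i_\u2113, N). -/
/-- The list of occurrences of `v` as a scattered subsequence of `u`: each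
occurrence is recorded as the corresponding sublist of `u.enum`, i.e., the
chosen (position, letter) pairs. -/
def occurrences {A : Type*} [DecidableEq A] (u v : List A) :
    List (List (ℕ × A)) :=
  (u.zipIdx.map Prod.swap).sublists.filter (fun l => decide (l.map Prod.snd = v))

/-- The number of occurrences of the letter `z` in `u` situated strictly after
(all positions of) the occurrence `l`. -/
def zerosAfter {A : Type*} [DecidableEq A] (z : A) (u : List A)
    (l : List (ℕ × A)) : ℕ :=
  (u.zipIdx.map Prod.swap).countP
    (fun p => decide (p.2 = z) && (l.map Prod.fst).all (fun i => decide (i < p.1)))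

namespace WordBinomAux

open List

variable {A : Type*} [DecidableEq A]

lemma sum_map_add {α : Type*} (L : List α) (f g : α → ℕ) :
    (L.map f).sum + (L.map g).sum = (L.map (fun x => f x + g x)).sum := by
  induction L with
  | nil => simp
  | cons a L ih => simp only [map_cons, sum_cons, ← ih]; ring

lemma count_concat_sublists (u : List A) (a : A) (w : List A) :
    (u ++ [a]).sublists.count w
      = u.sublists.count w + u.sublists.countP (fun x => decide (x ++ [a] = w)) := by
  rw [sublists_concat, count_append]
  congr 1
  rw [count_eq_countP, countP_map]
  apply countP_congr
  intro x _
  simp [Function.comp]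

lemma countP_concat_eq_count (L : List (List A)) (a : A) (w : List A) :
    L.countP (fun x => decide (x ++ [a] = w ++ [a])) = L.count w := by
  rw [count_eq_countP]
  apply countP_congr
  intro x _
  simp [append_left_inj]

lemma enum_concat (u : List A) (a : A) : (u ++ [a]).zipIdx.map Prod.swap = u.zipIdx.map Prod.swap ++ [(u.length, a)] := by
  simp [zipIdx_append]

lemma fst_lt_of_sublist_enum {u : List A} {l : List (ℕ × A)} (h : l <+ u.zipIdx.map Prod.swap)
    {i : ℕ} (hi : i ∈ l.map Prod.fst) : i < u.length := by
  rcases mem_map.1 hi with ⟨p, hp, rfl⟩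
  obtain ⟨q, hq, rfl⟩ := mem_map.1 (h.subset hp)
  simpa using snd_lt_add_of_mem_zipIdx hq

lemma zerosAfter_concat_of_sublist (z : A) {u : List A} (a : A) {l : List (ℕ × A)}
    (hs : l <+ u.zipIdx.map Prod.swap) :
    zerosAfter z (u ++ [a]) l = zerosAfter z u l + (if a = z then 1 else 0) := by
  unfold zerosAfter
  rw [enum_concat, countP_append]
  congr 1
  have hall : (l.map Prod.fst).all (fun i => decide (i < u.length)) = true := by
    rw [all_eq_true]
    intro i hi
    simp [fst_lt_of_sublist_enum hs hi]
  by_cases haz : a = z <;> simp [countP_cons, haz, hall] <;>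
    exact fun x y hxy => fst_lt_of_sublist_enum hs (mem_map.2 ⟨(x, y), hxy, rfl⟩)

lemma zerosAfter_concat_new (z : A) (u : List A) (a : A) (l₀ : List (ℕ × A)) :
    zerosAfter z (u ++ [a]) (l₀ ++ [(u.length, a)]) = 0 := by
  unfold zerosAfter
  rw [countP_eq_zero]
  intro p hp
  have hlt : p.1 < u.length + 1 := by
    obtain ⟨q, hq, hqp⟩ := mem_map.1 hp
    have h2 := snd_lt_add_of_mem_zipIdx hq
    rw [← hqp]; simpa using h2
  intro hptrue
  rw [Bool.and_eq_true] at hptrue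
  have h3 := all_eq_true.1 hptrue.2 u.length (by simp)
  simp only [decide_eq_true_eq] at h3
  omega

lemma occ_sum_concat (z : A) (u : List A) (a : A) (v : List A) (f : ℕ → ℕ) :
    ((occurrences (u ++ [a]) v).map (fun l => f (zerosAfter z (u ++ [a]) l))).sum
      = ((occurrences u v).map
          (fun l => f (zerosAfter z u l + (if a = z then 1 else 0)))).sum
        + u.sublists.countP (fun x => decide (x ++ [a] = v)) * f 0 := by
  unfold occurrences
  rw [enum_concat, sublists_concat, filter_append, filter_map, map_append, sum_append]
  congr 1
  · apply congrArg List.sum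
    apply map_congr_left
    intro l hl
    rw [zerosAfter_concat_of_sublist z a (mem_sublists.1 (mem_of_mem_filter hl))]
  · rw [map_map]
    have hc : ∀ l₀ ∈ (u.zipIdx.map Prod.swap).sublists.filter
        ((fun l => decide (l.map Prod.snd = v)) ∘ (fun x => x ++ [(u.length, a)])),
        ((fun l => f (zerosAfter z (u ++ [a]) l)) ∘ (fun x => x ++ [(u.length, a)])) l₀
          = f 0 := by
      intro l₀ _
      simp only [Function.comp]
      rw [zerosAfter_concat_new]
    rw [map_congr_left hc, map_const', sum_replicate, smul_eq_mul,
      ← countP_eq_length_filter]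
    congr 1
    have hs : u.sublists = (u.zipIdx.map Prod.swap).sublists.map (List.map Prod.snd) := by
      rw [← sublists_map, map_map]; simp [Function.comp_def]
    rw [hs, countP_map]
    apply countP_congr
    intro x _
    simp [Function.comp]

lemma length_eq_sum_map_one {α : Type*} (L : List α) :
    (L.map (fun _ : α => 1)).sum = L.length := by
  rw [map_const', sum_replicate, smul_eq_mul, mul_one]

lemma key (z : A) (u : List A) : ∀ (v : List A) (m : ℕ),
    wordBinom u (v ++ List.replicate m z)
      = ((occurrences u v).map (fun l => Nat.choose (zerosAfter z u l) m)).sum := by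
  induction u using List.reverseRecOn with
  | nil =>
    intro v m
    rcases v with - | ⟨b, v'⟩ <;> rcases m with - | m' <;>
      simp [wordBinom, occurrences, zerosAfter]
  | append_singleton u a ih =>
    intro v m
    have hL : wordBinom (u ++ [a]) (v ++ List.replicate m z)
        = u.sublists.count (v ++ List.replicate m z)
          + u.sublists.countP (fun x => decide (x ++ [a] = v ++ List.replicate m z)) :=
      count_concat_sublists u a (v ++ List.replicate m z)
    rw [hL]
    refine Eq.trans ?_ (occ_sum_concat z u a v (fun k => Nat.choose k m)).symm
    rcases m with - | m'
    · simp only [List.replicate_zero, List.append_nil, Nat.choose_zero_right, mul_one]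
      have h0 := ih v 0
      simp only [List.replicate_zero, List.append_nil, Nat.choose_zero_right] at h0
      rw [show (u.sublists.count v : ℕ) = wordBinom u v from rfl, h0]
    · by_cases haz : a = z
      · subst haz
        have h1 : u.sublists.countP
            (fun x => decide (x ++ [a] = v ++ List.replicate (m' + 1) a))
            = u.sublists.count (v ++ List.replicate m' a) := by
          have : v ++ List.replicate (m' + 1) a = (v ++ List.replicate m' a) ++ [a] := by
            rw [replicate_succ', ← append_assoc]
          rw [this, countP_concat_eq_count]
        rw [h1, if_pos rfl]
        rw [show (u.sublists.count (v ++ List.replicate (m' + 1) a) : ℕ)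
          = wordBinom u (v ++ List.replicate (m' + 1) a) from rfl,
          show (u.sublists.count (v ++ List.replicate m' a) : ℕ)
          = wordBinom u (v ++ List.replicate m' a) from rfl, ih v (m' + 1), ih v m']
        rw [Nat.choose_zero_succ, mul_zero, add_zero]
        rw [Nat.add_comm (((occurrences u v).map
          (fun l => (zerosAfter a u l).choose (m' + 1))).sum) _, sum_map_add]
        apply congrArg List.sum
        apply map_congr_left
        intro l _
        rw [Nat.choose_succ_succ']
      · have h1 : u.sublists.countP
            (fun x => decide (x ++ [a] = v ++ List.replicate (m' + 1) z)) = 0 := by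
          rw [countP_eq_zero]
          intro x _ hx
          simp only [decide_eq_true_eq] at hx
          rw [replicate_succ', ← append_assoc] at hx
          exact haz (by simpa using (List.append_inj' hx (by simp)).2)
        rw [h1, if_neg haz, Nat.choose_zero_succ, mul_zero, add_zero, add_zero]
        rw [show (u.sublists.count (v ++ List.replicate (m' + 1) z) : ℕ)
          = wordBinom u (v ++ List.replicate (m' + 1) z) from rfl, ih v (m' + 1)]
        simp

lemma block (z : A) (u v : List A) : ∀ (j : ℕ) (f : ℕ → ℕ), (∀ k < j, f k = 0) →
    ((occurrences (u ++ List.replicate j z) v).map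
        (fun l => f (zerosAfter z (u ++ List.replicate j z) l))).sum
      = ((occurrences u v).map (fun l => f (zerosAfter z u l + j))).sum := by
  intro j
  induction j with
  | zero => intro f hf; simp
  | succ j ihj =>
    intro f hf
    rw [replicate_succ' (n := j) (a := z), ← append_assoc]
    refine Eq.trans (occ_sum_concat z (u ++ List.replicate j z) z v f) ?_
    rw [if_pos rfl, hf 0 (Nat.succ_pos j), mul_zero, add_zero]
    refine Eq.trans (ihj (fun k => f (k + 1))
      (fun k hk => hf (k + 1) (by omega))) ?_
    apply congrArg List.sum
    apply map_congr_left
    intro l _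
    show f (zerosAfter z u l + j + 1) = _
    rw [Nat.add_assoc]

lemma not_sublist (z one : A) (hzo : z ≠ one) (u v : List A) (N : ℕ)
    (hN : u.count z < N) :
    ¬ (v ++ (List.replicate N z ++ [one])) <+ (u ++ List.replicate N z) := by
  intro h
  have h2 : (List.replicate N z ++ [one]) <+ u ++ List.replicate N z :=
    (sublist_append_right v _).trans h
  rcases sublist_append_iff.1 h2 with ⟨p₁, p₂, heq, hp₁, hp₂⟩
  rcases eq_nil_or_concat p₂ with rfl | ⟨p₂', b, rfl⟩
  · rw [append_nil] at heq
    have hc := hp₁.count_le z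
    rw [← heq] at hc
    simp only [count_append, count_replicate_self] at hc
    omega
  · simp only [concat_eq_append] at heq
    have hb : b = z := eq_of_mem_replicate (hp₂.subset (by simp))
    rw [← append_assoc] at heq
    have hone : [one] = [b] := (List.append_inj' heq (by simp)).2
    have hob : one = b := by simpa using hone
    rw [hb] at hob
    exact hzo hob.symm

end WordBinomAux

open List WordBinomAux in
theorem wordBinom_block_of_zeroes {A : Type*} [DecidableEq A]
    (z one : A) (hzo : z ≠ one) (u v : List A) (N : ℕ) (hN : u.count z < N) :
    wordBinom (u ++ List.replicate N z ++ [one]) (v ++ List.replicate N z ++ [one]) =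
      ((occurrences u v).map (fun l => Nat.choose (N + zerosAfter z u l) N)).sum := by
  have hT : u ++ List.replicate N z ++ [one] = (u ++ List.replicate N z) ++ [one] := rfl
  have hw : v ++ List.replicate N z ++ [one] = (v ++ List.replicate N z) ++ [one] := rfl
  rw [hT, hw]
  have h1 : wordBinom ((u ++ List.replicate N z) ++ [one])
      ((v ++ List.replicate N z) ++ [one])
      = wordBinom (u ++ List.replicate N z) (v ++ List.replicate N z) := by
    show ((u ++ List.replicate N z) ++ [one]).sublists.count _ = _
    rw [count_concat_sublists, countP_concat_eq_count]
    have hz : (u ++ List.replicate N z).sublists.count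
        ((v ++ List.replicate N z) ++ [one]) = 0 := by
      rw [count_eq_zero]
      intro hmem
      exact not_sublist z one hzo u v N hN
        (by simpa [append_assoc] using (mem_sublists.1 hmem))
    rw [hz, Nat.zero_add]
    rfl
  rw [h1, key z (u ++ List.replicate N z) v N,
    block z u v N (fun k => Nat.choose k N)
      (fun k hk => Nat.choose_eq_zero_of_lt hk)]
  apply congrArg List.sum
  apply map_congr_left
  intro l _
  rw [Nat.add_comm]
end
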